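/- Let E be a normed vector space over ℝ or ℂ and let p be a linear map defined on a subspace Dom(p) ⊆ E with values in E whose graph {(x, p(x)) : x ∈ Dom(p)} is closed in E × E. Suppose p is idempotent, i.e. p(Dom(p)) ⊆ Dom(p) and p(p(x)) = p(x) for every x ∈ Dom(p). Then the range p(Dom(p)) = {p(x) : x ∈ Dom(p)} is a closed subspace of E. -/
import Mathlib

/-- **The range of a closed idempotent operator is closed.**
Let `E` be a normed space over `ℝ` or `ℂ` (a field `𝕜` satisfying `RCLike 𝕜`) and
`p` a linear map defined on a subspace `Dom ⊆ E` with closed graph, which is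
idempotent.  Then the range `p(Dom)` is a closed subspace of `E`. -/
theorem range_of_closed_idempotent_isClosed
    {𝕜 : Type*} [RCLike 𝕜] {E : Type*} [NormedAddCommGroup E] [NormedSpace 𝕜 E]
    (Dom : Submodule 𝕜 E) (p : Dom →ₗ[𝕜] E)
    (hgraph : IsClosed {q : E × E | ∃ x : Dom, q.1 = (x : E) ∧ q.2 = p x})
    (hp_range : ∀ x : Dom, p x ∈ Dom)
    (hp_idem : ∀ x : Dom, p ⟨p x, hp_range x⟩ = p x) :
    IsClosed {y : E | ∃ x : Dom, y = p x} := by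
  have h : {y : E | ∃ x : Dom, y = p x} =
      (fun y : E => (y, y)) ⁻¹' {q : E × E | ∃ x : Dom, q.1 = (x : E) ∧ q.2 = p x} := by
    ext y
    simp only [Set.mem_setOf_eq, Set.mem_preimage]
    constructor
    · rintro ⟨x, rfl⟩
      exact ⟨⟨p x, hp_range x⟩, rfl, (hp_idem x).symm⟩
    · rintro ⟨x, _, h2⟩
      exact ⟨x, h2⟩
  rw [h]
  exact hgraph.preimage (continuous_id.prodMk continuous_id)
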